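/- arXiv:2510.06683 — 2 statements merged into one kernel-verified Lean document; each statement's English description precedes it below -/
import Mathlib

section
/- Let γ₁, γ₂, ... be independent random variables in [0,1] with common mean μ, let n_s < n_t be positive integers, and define μ̄_s = (1/n_s)∑_{p=1}^{n_s} γ_p and μ̄_t = (1/n_t)∑_{p=1}^{n_t} γ_p. Then μ̄_t − μ̄_s is a sub-Gaussian random variable with variance proxy at most (1/4)(1/n_s − 1/n_t). -/
open MeasureTheory ProbabilityTheory Real


lemma posD (p : ℝ) (hp0 : 0 ≤ p) (hp1 : p ≤ 1) (u : ℝ) :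
    0 < 1 - p + p * Real.exp u := by
  rcases eq_or_lt_of_le hp0 with h | h
  · simp [← h]
  · nlinarith [Real.exp_pos u, mul_pos h (Real.exp_pos u)]

lemma hoeffding_core (p : ℝ) (hp0 : 0 ≤ p) (hp1 : p ≤ 1) (u : ℝ) :
    Real.log (1 - p + p * Real.exp u) - p * u ≤ u ^ 2 / 8 := by
  have hD := posD p hp0 hp1
  set F : ℝ → ℝ := fun v => Real.log (1 - p + p * Real.exp v) - p * v with hFdef
  set F1 : ℝ → ℝ := fun v => p * Real.exp v / (1 - p + p * Real.exp v) - p with hF1def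
  have hDd : ∀ v : ℝ, HasDerivAt (fun v : ℝ => 1 - p + p * Real.exp v) (p * Real.exp v) v := by
    intro v
    simpa using ((Real.hasDerivAt_exp v).const_mul p).const_add (1 - p)
  have hFd : ∀ v, HasDerivAt F (F1 v) v := by
    intro v
    have h2 := (hDd v).log (hD v).ne'
    simpa [hFdef, hF1def, mul_comm] using h2.fun_sub ((hasDerivAt_id v).const_mul p)
  have hF1d : ∀ v, HasDerivAt F1
      (p * Real.exp v * (1 - p) / (1 - p + p * Real.exp v) ^ 2) v := by
    intro v
    have h := ((Real.hasDerivAt_exp v).const_mul p).div (hDd v) (hD v).ne'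
    have heq : (p * Real.exp v * (1 - p + p * Real.exp v) -
        p * Real.exp v * (p * Real.exp v)) / (1 - p + p * Real.exp v) ^ 2
        = p * Real.exp v * (1 - p) / (1 - p + p * Real.exp v) ^ 2 := by ring
    rw [heq] at h
    simpa [hF1def] using h.sub_const p
  have hF2le : ∀ v : ℝ, p * Real.exp v * (1 - p) / (1 - p + p * Real.exp v) ^ 2 ≤ 1/4 := by
    intro v
    rw [div_le_iff₀ (pow_pos (hD v) 2)]
    nlinarith [sq_nonneg ((1 - p) - p * Real.exp v)]
  -- G1 = derivative of G, is monotone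
  set G1 : ℝ → ℝ := fun v => v / 4 - F1 v with hG1def
  have hG1d : ∀ v, HasDerivAt G1
      (1/4 - p * Real.exp v * (1 - p) / (1 - p + p * Real.exp v) ^ 2) v := by
    intro v
    simpa [hG1def] using ((hasDerivAt_id v).div_const 4).fun_sub (hF1d v)
  have hG1mono : Monotone G1 := by
    refine monotone_of_deriv_nonneg (fun v => (hG1d v).differentiableAt) (fun v => ?_)
    rw [(hG1d v).deriv]
    linarith [hF2le v]
  have hG1zero : G1 0 = 0 := by simp [hG1def, hF1def]
  set G : ℝ → ℝ := fun v => v ^ 2 / 8 - F v with hGdef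
  have hGd : ∀ v, HasDerivAt G (G1 v) v := by
    intro v
    have h := ((hasDerivAt_pow 2 v).div_const 8).fun_sub (hFd v)
    convert h using 1
    · rfl
    · rfl
    simp [hG1def]; ring
  have hG0 : G 0 = 0 := by simp [hGdef, hFdef]
  have key : 0 ≤ G u := by
    rcases le_total 0 u with hu | hu
    · have hmono : MonotoneOn G (Set.Ici 0) := by
        refine monotoneOn_of_deriv_nonneg (convex_Ici 0)
          (fun v _ => (hGd v).continuousAt.continuousWithinAt)
          (fun v _ => (hGd v).differentiableAt.differentiableWithinAt) (fun v hv => ?_)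
        rw [(hGd v).deriv]
        rw [← hG1zero]
        exact hG1mono (le_of_lt (by simpa using hv))
      have := hmono (Set.self_mem_Ici) (Set.mem_Ici.2 hu) hu
      linarith [hG0]
    · have hanti : AntitoneOn G (Set.Iic 0) := by
        refine antitoneOn_of_deriv_nonpos (convex_Iic 0)
          (fun v _ => (hGd v).continuousAt.continuousWithinAt)
          (fun v _ => (hGd v).differentiableAt.differentiableWithinAt) (fun v hv => ?_)
        rw [(hGd v).deriv]
        rw [← hG1zero]
        exact hG1mono (le_of_lt (by simpa using hv))
      have := hanti (Set.mem_Iic.2 hu) Set.self_mem_Iic hu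
      linarith [hG0]
  have : F u ≤ u ^ 2 / 8 := by simpa [hGdef, sub_nonneg] using key
  simpa [hFdef] using this

lemma hoeffding_Icc {Ω : Type*} [MeasureSpace Ω] [IsProbabilityMeasure (ℙ : Measure Ω)]
    (X : Ω → ℝ) (hmeas : Measurable X) (hb : ∀ ω, X ω ∈ Set.Icc (0:ℝ) 1) (t : ℝ) :
    ∫ ω, Real.exp (t * (X ω - ∫ ω', X ω' ∂(ℙ : Measure Ω))) ∂ℙ ≤ Real.exp (t ^ 2 / 8) := by
  set m : ℝ := ∫ ω', X ω' ∂ℙ with hm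
  have intX : Integrable X ℙ := by
    refine Integrable.mono' (integrable_const 1) hmeas.aestronglyMeasurable
      (ae_of_all _ fun ω => ?_)
    rw [Real.norm_eq_abs, abs_le]
    exact ⟨by linarith [(hb ω).1], (hb ω).2⟩
  have hm0 : 0 ≤ m := integral_nonneg fun ω => (hb ω).1
  have hm1 : m ≤ 1 := by
    have := integral_mono intX (integrable_const 1) (fun ω => (hb ω).2)
    simpa using this
  -- pointwise convexity bound
  have key : ∀ ω, Real.exp (t * (X ω - m)) ≤
      (1 - X ω) * Real.exp (t * (0 - m)) + X ω * Real.exp (t * (1 - m)) := by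
    intro ω
    have h1 : (0:ℝ) ≤ 1 - X ω := by linarith [(hb ω).2]
    have h2 : (0:ℝ) ≤ X ω := (hb ω).1
    have h := convexOn_exp.2 (Set.mem_univ (t * (0 - m))) (Set.mem_univ (t * (1 - m)))
      h1 h2 (by ring)
    have harg : (1 - X ω) • (t * (0 - m)) + X ω • (t * (1 - m)) = t * (X ω - m) := by
      simp only [smul_eq_mul]; ring
    rw [harg] at h
    simpa [smul_eq_mul] using h
  -- integrability of both sides
  have intL : Integrable (fun ω => Real.exp (t * (X ω - m))) ℙ := by
    refine Integrable.mono' (integrable_const (Real.exp (|t| * (1 + |m|))))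
      ((hmeas.sub_const m).const_mul t).exp.aestronglyMeasurable (ae_of_all _ fun ω => ?_)
    rw [Real.norm_eq_abs, abs_of_pos (Real.exp_pos _), Real.exp_le_exp]
    calc t * (X ω - m) ≤ |t * (X ω - m)| := le_abs_self _
      _ = |t| * |X ω - m| := abs_mul _ _
      _ ≤ |t| * (1 + |m|) := by
          refine mul_le_mul_of_nonneg_left ?_ (abs_nonneg t)
          have := abs_sub_abs_le_abs_sub (X ω) m
          have hX : |X ω| ≤ 1 := abs_le.mpr ⟨by linarith [(hb ω).1], (hb ω).2⟩
          calc |X ω - m| ≤ |X ω| + |m| := abs_sub _ _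
            _ ≤ 1 + |m| := by linarith
  have ia : Integrable (fun ω => (1 - X ω) * Real.exp (t * (0 - m))) ℙ :=
    ((integrable_const 1).sub intX).mul_const _
  have ib : Integrable (fun ω => X ω * Real.exp (t * (1 - m))) ℙ := intX.mul_const _
  have intR : Integrable (fun ω =>
      (1 - X ω) * Real.exp (t * (0 - m)) + X ω * Real.exp (t * (1 - m))) ℙ := ia.add ib
  have hint := integral_mono intL intR key
  have hR : ∫ ω, ((1 - X ω) * Real.exp (t * (0 - m)) + X ω * Real.exp (t * (1 - m))) ∂ℙ
      = (1 - m) * Real.exp (t * (0 - m)) + m * Real.exp (t * (1 - m)) := by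
    rw [integral_add ia ib, integral_mul_const, integral_mul_const]
    have h1m : ∫ ω, (1 - X ω) ∂(ℙ : Measure Ω) = 1 - m := by
      rw [integral_sub (integrable_const 1) intX]; simp [hm]
    rw [h1m]
  rw [hR] at hint
  refine hint.trans ?_
  -- show the RHS equals exp (log (1-m+m e^t) - m t) and apply core lemma
  have hDpos := posD m hm0 hm1 t
  have heq : (1 - m) * Real.exp (t * (0 - m)) + m * Real.exp (t * (1 - m))
      = Real.exp (Real.log (1 - m + m * Real.exp t) - m * t) := by
    rw [Real.exp_sub, Real.exp_log hDpos]
    have e1 : Real.exp (t * (0 - m)) = Real.exp (-(m*t)) := by ring_nf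
    have e2 : Real.exp (t * (1 - m)) = Real.exp t * Real.exp (-(m*t)) := by
      rw [← Real.exp_add]; ring_nf
    rw [e1, e2, Real.exp_neg]
    field_simp
  rw [heq, Real.exp_le_exp]
  exact hoeffding_core m hm0 hm1 t

/-- The difference of running empirical means over nested index sets is sub-Gaussian:
for independent `γ_p ∈ [0,1]` with common mean `μ` and `n_s < n_t`, the random
variable `μ̄_t − μ̄_s` (with `μ̄_s, μ̄_t` the empirical means of the first `n_s`,
`n_t` samples) is sub-Gaussian with variance proxy at most `(1/4)(1/n_s − 1/n_t)`,
i.e. its centered moment generating function satisfies the sub-Gaussian bound. -/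
theorem diff_empirical_means_subGaussian
    {Ω : Type*} [MeasureSpace Ω] [IsProbabilityMeasure (ℙ : Measure Ω)]
    (γ : ℕ → Ω → ℝ) (μ : ℝ) (ns nt : ℕ) (hns : 0 < ns) (hnt : ns < nt)
    (hmeas : ∀ p, Measurable (γ p))
    (hindep : iIndepFun γ ℙ)
    (hbdd : ∀ p, ∀ ω, γ p ω ∈ Set.Icc (0 : ℝ) 1)
    (hmean : ∀ p, ∫ ω, γ p ω ∂ℙ = μ)
    (Y : Ω → ℝ)
    (hY : Y = fun ω =>
      (1 / (nt : ℝ)) * ∑ p ∈ Finset.range nt, γ p ω -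
      (1 / (ns : ℝ)) * ∑ p ∈ Finset.range ns, γ p ω) :
    ∀ l : ℝ, ∫ ω, Real.exp (l * (Y ω - ∫ ω', Y ω' ∂ℙ)) ∂ℙ ≤
      Real.exp (l ^ 2 * ((1 / 4) * (1 / ns - 1 / nt)) / 2) := by
  intro l
  have hns0 : (ns : ℝ) ≠ 0 := Nat.cast_ne_zero.2 hns.ne'
  have hnt0 : (nt : ℝ) ≠ 0 := Nat.cast_ne_zero.2 (hns.trans hnt).ne'
  set c : ℕ → ℝ := fun p => if p < ns then 1 / nt - 1 / ns else 1 / nt with hc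
  set X : ℕ → Ω → ℝ := fun p ω => c p * (γ p ω - μ) with hX
  have hXmeas : ∀ p, Measurable (X p) := fun p => ((hmeas p).sub_const μ).const_mul (c p)
  have hXindep : iIndepFun X ℙ :=
    hindep.comp (fun p x => c p * (x - μ))
      (fun p => (measurable_id.sub_const μ).const_mul (c p))
  have intγ : ∀ p, Integrable (γ p) ℙ := by
    intro p
    refine Integrable.mono' (integrable_const 1) (hmeas p).aestronglyMeasurable
      (ae_of_all _ fun ω => ?_)
    rw [Real.norm_eq_abs, abs_le]
    exact ⟨by linarith [(hbdd p ω).1], (hbdd p ω).2⟩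
  have hsplit : ∀ f : ℕ → ℝ, ∑ p ∈ Finset.range nt, f p =
      ∑ p ∈ Finset.range ns, f p + ∑ p ∈ Finset.Ico ns nt, f p := by
    intro f
    rw [Finset.range_eq_Ico, Finset.range_eq_Ico, Finset.sum_Ico_consecutive _ (Nat.zero_le ns) hnt.le]
  -- E Y = 0
  have hEY : ∫ ω', Y ω' ∂ℙ = 0 := by
    rw [hY]
    rw [integral_sub ((integrable_finset_sum _ (fun p _ => intγ p)).const_mul _)
      ((integrable_finset_sum _ (fun p _ => intγ p)).const_mul _),
      integral_const_mul, integral_const_mul,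
      integral_finset_sum _ (fun p _ => intγ p),
      integral_finset_sum _ (fun p _ => intγ p)]
    simp only [hmean, Finset.sum_const, Finset.card_range, nsmul_eq_mul]
    field_simp
    ring
  -- sum of X equals Y
  have hXsum : ∀ ω, ∑ p ∈ Finset.range nt, X p ω = Y ω := by
    intro ω
    rw [hY]
    dsimp only
    rw [hsplit (fun p => X p ω), hsplit (fun p => γ p ω)]
    have h1 : ∑ p ∈ Finset.range ns, X p ω
        = (1 / (nt:ℝ) - 1 / ns) * (∑ p ∈ Finset.range ns, γ p ω - ns * μ) :=
      calc ∑ p ∈ Finset.range ns, X p ω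
          = ∑ p ∈ Finset.range ns, ((1 / (nt:ℝ) - 1 / ns) * (γ p ω - μ)) :=
            Finset.sum_congr rfl (fun p hp => by
              simp [hX, hc, if_pos (Finset.mem_range.mp hp)])
        _ = (1 / (nt:ℝ) - 1 / ns) * ∑ p ∈ Finset.range ns, (γ p ω - μ) :=
            (Finset.mul_sum _ _ _).symm
        _ = _ := by
            rw [Finset.sum_sub_distrib, Finset.sum_const, Finset.card_range, nsmul_eq_mul]
    have h2 : ∑ p ∈ Finset.Ico ns nt, X p ω
        = (1 / (nt:ℝ)) * (∑ p ∈ Finset.Ico ns nt, γ p ω - ((nt - ns : ℕ) : ℝ) * μ) :=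
      calc ∑ p ∈ Finset.Ico ns nt, X p ω
          = ∑ p ∈ Finset.Ico ns nt, ((1 / (nt:ℝ)) * (γ p ω - μ)) :=
            Finset.sum_congr rfl (fun p hp => by
              simp [hX, hc, if_neg (not_lt.2 (Finset.mem_Ico.mp hp).1)])
        _ = (1 / (nt:ℝ)) * ∑ p ∈ Finset.Ico ns nt, (γ p ω - μ) :=
            (Finset.mul_sum _ _ _).symm
        _ = _ := by
            rw [Finset.sum_sub_distrib, Finset.sum_const, Nat.card_Ico, nsmul_eq_mul]
    rw [h1, h2]
    push_cast [Nat.cast_sub hnt.le]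
    field_simp
    ring
  rw [hEY]
  simp only [sub_zero]
  have hfun : (fun ω => Real.exp (l * Y ω))
      = fun ω => Real.exp (l * (∑ p ∈ Finset.range nt, X p) ω) := by
    funext ω
    rw [Finset.sum_apply, hXsum ω]
  calc ∫ ω, Real.exp (l * Y ω) ∂ℙ
      = mgf (∑ p ∈ Finset.range nt, X p) ℙ l := by rw [hfun]; rfl
    _ = ∏ p ∈ Finset.range nt, mgf (X p) ℙ l := hXindep.mgf_sum hXmeas _
    _ ≤ ∏ p ∈ Finset.range nt, Real.exp ((l * c p) ^ 2 / 8) := by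
        refine Finset.prod_le_prod (fun p _ => mgf_nonneg) (fun p _ => ?_)
        have hrw : (fun ω => Real.exp (l * X p ω))
            = fun ω => Real.exp ((l * c p) * (γ p ω - ∫ ω', γ p ω' ∂(ℙ : Measure Ω))) := by
          funext ω
          rw [hmean p]
          congr 1
          simp only [hX]
          ring
        calc mgf (X p) ℙ l = ∫ ω, Real.exp (l * X p ω) ∂ℙ := rfl
          _ = ∫ ω, Real.exp ((l * c p) * (γ p ω - ∫ ω', γ p ω' ∂(ℙ : Measure Ω))) ∂ℙ := by
              rw [hrw]
          _ ≤ Real.exp ((l * c p) ^ 2 / 8) := hoeffding_Icc (γ p) (hmeas p) (hbdd p) _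
    _ = Real.exp (∑ p ∈ Finset.range nt, (l * c p) ^ 2 / 8) := by rw [Real.exp_sum]
    _ = Real.exp (l ^ 2 * ((1 / 4) * (1 / ns - 1 / nt)) / 2) := by
        congr 1
        rw [hsplit (fun p => (l * c p) ^ 2 / 8)]
        have e1 : (∑ p ∈ Finset.range ns, (l * c p) ^ 2 / 8)
            = ns * ((l * (1 / (nt:ℝ) - 1 / ns)) ^ 2 / 8) := by
          have hcong : ∀ p ∈ Finset.range ns,
              (l * c p) ^ 2 / 8 = (l * (1 / (nt:ℝ) - 1 / ns)) ^ 2 / 8 := fun p hp => by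
            simp [hc, if_pos (Finset.mem_range.mp hp)]
          rw [Finset.sum_congr rfl hcong, Finset.sum_const, Finset.card_range, nsmul_eq_mul]
        have e2 : (∑ p ∈ Finset.Ico ns nt, (l * c p) ^ 2 / 8)
            = ((nt - ns : ℕ) : ℝ) * ((l * (1 / (nt:ℝ))) ^ 2 / 8) := by
          have hcong : ∀ p ∈ Finset.Ico ns nt,
              (l * c p) ^ 2 / 8 = (l * (1 / (nt:ℝ))) ^ 2 / 8 := fun p hp => by
            simp [hc, if_neg (not_lt.2 (Finset.mem_Ico.mp hp).1)]
          rw [Finset.sum_congr rfl hcong, Finset.sum_const, Nat.card_Ico, nsmul_eq_mul]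
        rw [e1, e2]
        push_cast [Nat.cast_sub hnt.le]
        field_simp
        ring
end

section
/- For b ≥ 3 + log₂(1 + β) with β ≥ 0 and M ≥ 1, the sum ∑_{l=b}^{∞} 2·exp(−(2^{l−3} − 1 − β)²/(β²M)) is at most 2 whenever b ≥ 3 + log₂(1 + β + β√(M·ln 2 / 2)). -/
open Real

private lemma tail_nat_ineq : ∀ k : ℕ, 6 * k ≤ 4 ^ k + 2 := by
  intro k
  induction k with
  | zero => norm_num
  | succ n ih =>
    rcases Nat.eq_zero_or_pos n with h | h
    · subst h; norm_num
    · have h4 : 4 ≤ 4 ^ n := by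
        calc (4:ℕ) = 4 ^ 1 := rfl
        _ ≤ 4 ^ n := Nat.pow_le_pow_right (by norm_num) h
      have : 4 ^ n + 4 ^ n + 4 ^ n + 4 ^ n = 4 ^ (n+1) := by rw [pow_succ]; ring
      omega

/-- Tail-sum bound over bit lengths: for `b ≥ 3 + log₂(1 + β + β√(M·ln 2 / 2))`
(with `β ≥ 0`, `M ≥ 1`, and `b ≥ 3 + log₂(1 + β)`), the doubly-exponentially
decaying sum `∑_{l=b}^{∞} 2·exp(−(2^{l−3} − 1 − β)²/(β²M))` is at most `2`. -/
theorem tail_sum_bound (b : ℕ) (β M : ℝ) (hβ : 0 ≤ β) (hM : 1 ≤ M)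
    (hb0 : (b : ℝ) ≥ 3 + Real.logb 2 (1 + β))
    (hb : (b : ℝ) ≥ 3 + Real.logb 2 (1 + β + β * Real.sqrt (M * Real.log 2 / 2))) :
    (∑' l : ℕ, if b ≤ l then
        2 * Real.exp (-((2 : ℝ) ^ ((l : ℝ) - 3) - 1 - β) ^ 2 / (β ^ 2 * M))
      else 0) ≤ 2 := by
  set f : ℕ → ℝ := fun l => if b ≤ l then
      2 * Real.exp (-((2 : ℝ) ^ ((l : ℝ) - 3) - 1 - β) ^ 2 / (β ^ 2 * M))
    else 0 with hf
  rcases eq_or_lt_of_le hβ with hβ0 | hβpos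
  · -- β = 0 : each term with l ≥ b equals 2, series not summable, tsum = 0
    have hfl : ∀ l : ℕ, b ≤ l → f l = 2 := by
      intro l hl
      simp only [hf, if_pos hl, ← hβ0]
      norm_num
    have hns : ¬ Summable f := by
      intro hs
      have h0 := hs.tendsto_atTop_zero
      have h2 : Filter.Tendsto f Filter.atTop (nhds 2) := by
        refine Filter.Tendsto.congr' ?_ tendsto_const_nhds
        filter_upwards [Filter.eventually_ge_atTop b] with l hl
        exact (hfl l hl).symm
      have := tendsto_nhds_unique h0 h2
      norm_num at this
    rw [tsum_eq_zero_of_not_summable hns]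
    norm_num
  · -- β > 0
    set s : ℝ := Real.sqrt (M * Real.log 2 / 2) with hs
    have hlog2 : 0 < Real.log 2 := Real.log_pos (by norm_num)
    have hs0 : 0 ≤ s := Real.sqrt_nonneg _
    have hs2 : s ^ 2 = M * Real.log 2 / 2 := Real.sq_sqrt (by positivity)
    have hA : 0 < 1 + β + β * s := by positivity
    have hpow_b : 1 + β + β * s ≤ (2:ℝ) ^ ((b:ℝ) - 3) := by
      have h1 : (2:ℝ) ^ (Real.logb 2 (1 + β + β * s)) = 1 + β + β * s :=
        Real.rpow_logb (by norm_num) (by norm_num) hA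
      calc 1 + β + β * s = (2:ℝ) ^ (Real.logb 2 (1 + β + β * s)) := h1.symm
      _ ≤ (2:ℝ) ^ ((b:ℝ) - 3) :=
          Real.rpow_le_rpow_of_exponent_le one_le_two (by linarith)
    set g : ℕ → ℝ := fun k => if k = 0 then Real.sqrt 2 else 4 * (1/8 : ℝ) ^ k with hg
    set g' : ℕ → ℝ := fun l => if b ≤ l then g (l - b) else 0 with hg'
    have hKpos : 0 < β ^ 2 * M := by positivity
    -- pointwise bound
    have hfg : ∀ l : ℕ, f l ≤ g' l := by
      intro l
      simp only [hf, hg']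
      by_cases hl : b ≤ l
      · simp only [if_pos hl]
        set k : ℕ := l - b with hk
        have hlk : (l : ℝ) = (k : ℝ) + b := by
          have : l = k + b := by omega
          rw [this]; push_cast; ring
        have h2l : (2:ℝ) ^ ((l:ℝ) - 3) = (2:ℝ) ^ (k:ℕ) * (2:ℝ) ^ ((b:ℝ) - 3) := by
          rw [hlk, show (k:ℝ) + (b:ℝ) - 3 = (k:ℝ) + ((b:ℝ) - 3) by ring,
            Real.rpow_add (by norm_num), Real.rpow_natCast]
        have h2k1 : (1:ℝ) ≤ (2:ℝ) ^ (k:ℕ) := one_le_pow₀ one_le_two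
        -- X ≥ 2^k * β * s
        have hX : β * s * (2:ℝ) ^ (k:ℕ) ≤ (2:ℝ) ^ ((l:ℝ) - 3) - 1 - β := by
          rw [h2l]
          nlinarith [mul_le_mul_of_nonneg_left hpow_b (le_of_lt (by positivity :
            (0:ℝ) < (2:ℝ) ^ (k:ℕ)))]
        have hX0 : (0:ℝ) ≤ β * s * (2:ℝ) ^ (k:ℕ) := by positivity
        have hsq : (β * s * (2:ℝ) ^ (k:ℕ)) ^ 2 ≤
            ((2:ℝ) ^ ((l:ℝ) - 3) - 1 - β) ^ 2 := by
          have := pow_le_pow_left₀ hX0 hX 2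
          exact this
        -- divide
        have hdiv : ((2:ℝ) ^ (k:ℕ)) ^ 2 * Real.log 2 / 2 ≤
            ((2:ℝ) ^ ((l:ℝ) - 3) - 1 - β) ^ 2 / (β ^ 2 * M) := by
          rw [le_div_iff₀ hKpos]
          have key : (β * s * (2:ℝ) ^ (k:ℕ)) ^ 2 =
              ((2:ℝ) ^ (k:ℕ)) ^ 2 * Real.log 2 / 2 * (β ^ 2 * M) := by
            rw [mul_pow, mul_pow, hs2]; ring
          linarith [hsq]
        have hexp : Real.exp (-((2:ℝ) ^ ((l:ℝ) - 3) - 1 - β) ^ 2 / (β ^ 2 * M)) ≤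
            Real.exp (-(((2:ℝ) ^ (k:ℕ)) ^ 2 * Real.log 2 / 2)) := by
          rw [Real.exp_le_exp, neg_div]
          linarith
        rcases Nat.eq_zero_or_pos k with hk0 | hk1
        · -- k = 0: bound by √2
          rw [hk0]
          simp only [hg, if_pos rfl]
          have : (2:ℝ) * Real.exp (-(((2:ℝ) ^ (0:ℕ)) ^ 2 * Real.log 2 / 2)) =
              Real.sqrt 2 := by
            calc (2:ℝ) * Real.exp (-(((2:ℝ) ^ (0:ℕ)) ^ 2 * Real.log 2 / 2))
                = Real.exp (Real.log 2) * Real.exp (-(Real.log 2 / 2)) := by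
                  rw [Real.exp_log (by norm_num)]; norm_num
            _ = Real.exp (Real.log 2 + -(Real.log 2 / 2)) := (Real.exp_add _ _).symm
            _ = Real.exp (Real.log 2 * (1/2)) := by congr 1; ring
            _ = Real.sqrt 2 := by
                  rw [Real.sqrt_eq_rpow, Real.rpow_def_of_pos (by norm_num : (0:ℝ) < 2)]
          calc 2 * Real.exp (-((2:ℝ) ^ ((l:ℝ) - 3) - 1 - β) ^ 2 / (β ^ 2 * M))
              ≤ 2 * Real.exp (-(((2:ℝ) ^ (0:ℕ)) ^ 2 * Real.log 2 / 2)) := by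
                rw [hk0] at hexp; linarith
          _ = Real.sqrt 2 := this
        · -- k ≥ 1
          have hkne : k ≠ 0 := Nat.pos_iff_ne_zero.mp hk1
          simp only [hg, if_neg hkne]
          have h4k : (6:ℝ) * k ≤ 4 ^ k + 2 := by
            have := tail_nat_ineq k
            exact_mod_cast this
          have h4k2 : ((2:ℝ) ^ (k:ℕ)) ^ 2 = (4:ℝ) ^ k := by
            rw [← pow_mul, mul_comm, pow_mul]; norm_num
          -- exponent comparison
          have hexp2 : Real.exp (-(((2:ℝ) ^ (k:ℕ)) ^ 2 * Real.log 2 / 2)) ≤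
              Real.exp ((1 - 3 * (k:ℝ)) * Real.log 2) := by
            rw [Real.exp_le_exp, h4k2]
            nlinarith [hlog2, h4k]
          have hrhs : (4:ℝ) * (1/8 : ℝ) ^ k = 2 * Real.exp ((1 - 3 * (k:ℝ)) * Real.log 2) := by
            have h8 : (1/8 : ℝ) = Real.exp (-(3 * Real.log 2)) := by
              rw [Real.exp_neg, show (3:ℝ) * Real.log 2 = Real.log (2 ^ (3:ℕ)) by
                rw [Real.log_pow]; push_cast; ring, Real.exp_log (by norm_num)]
              norm_num
            rw [h8, ← Real.exp_nat_mul]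
            rw [show (4:ℝ) = 2 * Real.exp (Real.log 2) by
              rw [Real.exp_log (by norm_num)]; norm_num]
            rw [mul_assoc, ← Real.exp_add]
            congr 1
            ring
          calc 2 * Real.exp (-((2:ℝ) ^ ((l:ℝ) - 3) - 1 - β) ^ 2 / (β ^ 2 * M))
              ≤ 2 * Real.exp ((1 - 3 * (k:ℝ)) * Real.log 2) := by
                have := le_trans hexp hexp2
                linarith
          _ = 4 * (1/8 : ℝ) ^ k := hrhs.symm
      · simp only [if_neg hl]
        exact le_refl 0
    have hfnonneg : ∀ l : ℕ, 0 ≤ f l := by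
      intro l
      simp only [hf]
      split
      · positivity
      · exact le_refl 0
    -- summability of g
    have hsqrt2le : Real.sqrt 2 ≤ 2 := by
      nlinarith [Real.sq_sqrt (show (0:ℝ) ≤ 2 by norm_num), Real.sqrt_nonneg 2]
    have hgeo : Summable (fun k : ℕ => (4:ℝ) * (1/8 : ℝ) ^ k) :=
      (summable_geometric_of_lt_one (by norm_num) (by norm_num)).mul_left 4
    have hgnonneg : ∀ k : ℕ, 0 ≤ g k := by
      intro k
      simp only [hg]
      split
      · exact Real.sqrt_nonneg 2
      · positivity
    have hgle : ∀ k : ℕ, g k ≤ 4 * (1/8 : ℝ) ^ k := by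
      intro k
      simp only [hg]
      split
      · rename_i h; subst h; norm_num; linarith
      · exact le_refl _
    have sg : Summable g := Summable.of_nonneg_of_le hgnonneg hgle hgeo
    have hshift : (fun n : ℕ => g' (n + b)) = g := by
      funext n
      simp only [hg', if_pos (Nat.le_add_left b n), Nat.add_sub_cancel]
    have sg' : Summable g' := (summable_nat_add_iff b).mp (by rw [hshift]; exact sg)
    have sf : Summable f :=
      Summable.of_nonneg_of_le hfnonneg hfg sg'
    have h1 : ∑' l, f l ≤ ∑' l, g' l := Summable.tsum_le_tsum hfg sf sg'
    have h2 : ∑' l, g' l = ∑' k, g k := by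
      have := Summable.sum_add_tsum_nat_add b sg'
      have hzero : ∑ i ∈ Finset.range b, g' i = 0 := by
        apply Finset.sum_eq_zero
        intro i hi
        have hib : ¬ b ≤ i := by
          rw [Finset.mem_range] at hi; omega
        simp only [hg', if_neg hib]
      rw [← this, hzero, zero_add, hshift]
    have h3 : ∑' k, g k ≤ 2 := by
      rw [Summable.tsum_eq_zero_add sg]
      have h0 : g 0 = Real.sqrt 2 := by simp [hg]
      have heq : (fun n : ℕ => g (n + 1)) = fun n : ℕ => (1/2 : ℝ) * (1/8 : ℝ) ^ n := by
        funext n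
        simp only [hg, if_neg (Nat.succ_ne_zero n)]
        ring
      rw [h0, heq, tsum_mul_left, tsum_geometric_of_lt_one (by norm_num) (by norm_num)]
      nlinarith [Real.sq_sqrt (show (0:ℝ) ≤ 2 by norm_num), Real.sqrt_nonneg 2]
    calc (∑' l, f l) ≤ ∑' l, g' l := h1
    _ = ∑' k, g k := h2
    _ ≤ 2 := h3
end
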